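/- Any two generalized Nash equilibria of the energy-sharing game have the same demand adjustments and the same sharing schedule: if (Δd¹, q¹, q^{c,1}, δ¹) and (Δd², q², q^{c,2}, δ²) are both GNEs, then Δd¹ = Δd² and q^{c,1} = q^{c,2}. -/
import Mathlib


open Finset

/-- The set `Q` of feasible sharing schedules: total exchange is zero and all
line-flow limits are respected. -/
def Qset {n L : ℕ} (π : Fin L → Fin n → ℝ) (F : Fin L → ℝ) : Set (Fin n → ℝ) :=
  {qc | (∑ k, qc k) = 0 ∧
    ∀ l : Fin L, -F l ≤ ∑ k, π l k * qc k ∧ ∑ k, π l k * qc k ≤ F l}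

/-- `c k = 0` for consumers `k < I` and `c k = w k + Δw k` for prosumers. -/
def cvec (I J : ℕ) (w Δw : Fin (I + J) → ℝ) : Fin (I + J) → ℝ :=
  fun k => if (k : ℕ) < I then 0 else w k + Δw k

/-- Generalized Nash equilibrium of the energy-sharing game:
(i) each user's `(Δd k, q k)` minimizes its disutility plus penalty over its own
feasible set (parameterized by `qc k` and `δ k`);
(ii) the operator's `(qc, δ)` minimizes `∑ δ_k²` over its feasible set
(parameterized by `q`). -/
def IsGNE {n L : ℕ} (α β ζ d c Dlo Dhi : Fin n → ℝ) (τ : ℝ)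
    (π : Fin L → Fin n → ℝ) (F : Fin L → ℝ)
    (Δd q qc δ : Fin n → ℝ) : Prop :=
  (∀ k : Fin n,
    (q k + δ k = d k + Δd k - c k ∧ Dlo k ≤ d k + Δd k ∧ d k + Δd k ≤ Dhi k) ∧
    (∀ x y : ℝ, y + δ k = d k + x - c k → Dlo k ≤ d k + x → d k + x ≤ Dhi k →
      (α k * (Δd k) ^ 2 + β k * Δd k + ζ k) + τ / 2 * (qc k - q k) ^ 2 ≤
      (α k * x ^ 2 + β k * x + ζ k) + τ / 2 * (qc k - y) ^ 2)) ∧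
  ((∀ k, δ k = qc k - q k) ∧ qc ∈ Qset π F ∧
    (∀ qc' δ' : Fin n → ℝ, (∀ k, δ' k = qc' k - q k) → qc' ∈ Qset π F →
      ∑ k, (δ k) ^ 2 ≤ ∑ k, (δ' k) ^ 2))

/-- Feasibility for the centralized problem (7). -/
def Feasible7 {n L : ℕ} (d c Dlo Dhi : Fin n → ℝ)
    (π : Fin L → Fin n → ℝ) (F : Fin L → ℝ) (Δd : Fin n → ℝ) : Prop :=
  (∀ k, Dlo k ≤ d k + Δd k ∧ d k + Δd k ≤ Dhi k) ∧
  (fun k => d k + Δd k - c k) ∈ Qset π F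

/-- If `0 ≤ A t + B t²` for all small positive `t`, then `0 ≤ A`. -/
lemma foc_aux (A B : ℝ) (h : ∀ t : ℝ, 0 < t → t ≤ 1 → 0 ≤ A * t + B * t ^ 2) : 0 ≤ A := by
  by_contra hA
  push_neg at hA
  rcases le_or_gt B 0 with hB | hB
  · have := h 1 one_pos le_rfl; nlinarith
  · have hpos : 0 < -A / (2 * B) := div_pos (by linarith) (by linarith)
    set t := min 1 (-A / (2 * B)) with ht
    have htpos : 0 < t := lt_min one_pos hpos
    have ht1 : t ≤ 1 := min_le_left _ _
    have ht2 : t ≤ -A / (2 * B) := min_le_right _ _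
    have hkey := h t htpos ht1
    have hBt : B * t ≤ -A / 2 := by
      rw [le_div_iff₀ (by linarith)] at ht2
      nlinarith
    nlinarith

lemma user_foc (a b z τ dk ck Dlo Dhi qk qck δk x1 x2 : ℝ)
    (hδ : δk = qck - qk) (hfe : qk + δk = dk + x1 - ck)
    (hlo1 : Dlo ≤ dk + x1) (hhi1 : dk + x1 ≤ Dhi)
    (hlo2 : Dlo ≤ dk + x2) (hhi2 : dk + x2 ≤ Dhi)
    (hmin : ∀ x y : ℝ, y + δk = dk + x - ck → Dlo ≤ dk + x → dk + x ≤ Dhi →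
      (a * x1 ^ 2 + b * x1 + z) + τ / 2 * (qck - qk) ^ 2 ≤
      (a * x ^ 2 + b * x + z) + τ / 2 * (qck - y) ^ 2) :
    0 ≤ (x1 - x2) * (τ * δk - (2 * a * x1 + b)) := by
  apply foc_aux _ ((a + τ / 2) * (x1 - x2) ^ 2)
  intro t ht0 ht1
  have hy : (dk + (x1 + t * (x2 - x1)) - ck - δk) + δk = dk + (x1 + t * (x2 - x1)) - ck := by
    ring
  have hlo : Dlo ≤ dk + (x1 + t * (x2 - x1)) := by
    nlinarith [mul_nonneg ht0.le (sub_nonneg.mpr hlo2),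
      mul_nonneg (sub_nonneg.mpr ht1) (sub_nonneg.mpr hlo1)]
  have hhi : dk + (x1 + t * (x2 - x1)) ≤ Dhi := by
    nlinarith [mul_nonneg ht0.le (sub_nonneg.mpr hhi2),
      mul_nonneg (sub_nonneg.mpr ht1) (sub_nonneg.mpr hhi1)]
  have key := hmin (x1 + t * (x2 - x1)) (dk + (x1 + t * (x2 - x1)) - ck - δk) hy hlo hhi
  have e1 : qck - qk = δk := by linarith
  have e2 : qck - (dk + (x1 + t * (x2 - x1)) - ck - δk) = δk + t * (x1 - x2) := by
    linear_combination hfe - hδ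
  rw [e1, e2] at key
  nlinarith [key]

lemma op_foc {n L : ℕ} (q qc qc' δ : Fin n → ℝ) (π : Fin L → Fin n → ℝ) (F : Fin L → ℝ)
    (hδ : ∀ k, δ k = qc k - q k) (hqc : qc ∈ Qset π F) (hqc' : qc' ∈ Qset π F)
    (hmin : ∀ qc'' δ'' : Fin n → ℝ, (∀ k, δ'' k = qc'' k - q k) → qc'' ∈ Qset π F →
      ∑ k, (δ k) ^ 2 ≤ ∑ k, (δ'' k) ^ 2) :
    0 ≤ ∑ k, δ k * (qc' k - qc k) := by
  obtain ⟨hz, hf⟩ := hqc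
  obtain ⟨hz', hf'⟩ := hqc'
  apply foc_aux _ ((∑ k, (qc' k - qc k) ^ 2) / 2)
  intro t ht0 ht1
  set qct : Fin n → ℝ := fun k => qc k + t * (qc' k - qc k) with hqct
  have hmem : qct ∈ Qset π F := by
    constructor
    · have h1 : ∑ k, qct k = (1 - t) * ∑ k, qc k + t * ∑ k, qc' k := by
        rw [Finset.mul_sum, Finset.mul_sum, ← Finset.sum_add_distrib]
        exact Finset.sum_congr rfl fun k _ => by simp [hqct]; ring
      rw [h1, hz, hz']; ring
    · intro l
      have h1 : ∑ k, π l k * qct k =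
          (1 - t) * ∑ k, π l k * qc k + t * ∑ k, π l k * qc' k := by
        rw [Finset.mul_sum, Finset.mul_sum, ← Finset.sum_add_distrib]
        exact Finset.sum_congr rfl fun k _ => by simp [hqct]; ring
      obtain ⟨hl1, hl2⟩ := hf l
      obtain ⟨hl1', hl2'⟩ := hf' l
      constructor
      · rw [h1]
        nlinarith [mul_nonneg ht0.le (sub_nonneg.mpr hl1'), mul_nonneg (sub_nonneg.mpr ht1) (sub_nonneg.mpr hl1)]
      · rw [h1]
        nlinarith [mul_nonneg ht0.le (sub_nonneg.mpr hl2'), mul_nonneg (sub_nonneg.mpr ht1) (sub_nonneg.mpr hl2)]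
  have key := hmin qct (fun k => qct k - q k) (fun k => rfl) hmem
  have expand : ∑ k, (qct k - q k) ^ 2 =
      ∑ k, (δ k) ^ 2 + (2 * t) * ∑ k, δ k * (qc' k - qc k)
        + t ^ 2 * ∑ k, (qc' k - qc k) ^ 2 := by
    rw [Finset.mul_sum, Finset.mul_sum, ← Finset.sum_add_distrib, ← Finset.sum_add_distrib]
    refine Finset.sum_congr rfl fun k _ => ?_
    have h := hδ k
    simp only [hqct]
    linear_combination (-(qc k - q k + δ k + 2 * t * (qc' k - qc k))) * h
  rw [expand] at key
  linarith [key]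

/-- any two generalized Nash equilibria of the energy-sharing game
have the same demand adjustments and the same sharing schedule. -/
theorem gne_partial_uniqueness (I J L : ℕ)
    (α β ζ d w Δw Dlo Dhi : Fin (I + J) → ℝ) (τ : ℝ)
    (π : Fin L → Fin (I + J) → ℝ) (F : Fin L → ℝ)
    (hα : ∀ k, 0 < α k) (hD : ∀ k, Dlo k ≤ Dhi k) (hτ : 0 < τ)
    (Δd₁ q₁ qc₁ δ₁ Δd₂ q₂ qc₂ δ₂ : Fin (I + J) → ℝ)
    (h₁ : IsGNE α β ζ d (cvec I J w Δw) Dlo Dhi τ π F Δd₁ q₁ qc₁ δ₁)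
    (h₂ : IsGNE α β ζ d (cvec I J w Δw) Dlo Dhi τ π F Δd₂ q₂ qc₂ δ₂) :
    Δd₁ = Δd₂ ∧ qc₁ = qc₂ := by
  have hu1 := h₁.1
  have hδ1 := h₁.2.1
  have hQ1 := h₁.2.2.1
  have hop1 := h₁.2.2.2
  have hu2 := h₂.1
  have hδ2 := h₂.2.1
  have hQ2 := h₂.2.2.1
  have hop2 := h₂.2.2.2
  have hqcv1 : ∀ k, qc₁ k = d k + Δd₁ k - cvec I J w Δw k := fun k => by
    have h1 := (hu1 k).1.1; have h2 := hδ1 k; linarith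
  have hqcv2 : ∀ k, qc₂ k = d k + Δd₂ k - cvec I J w Δw k := fun k => by
    have h1 := (hu2 k).1.1; have h2 := hδ2 k; linarith
  have foc1 : ∀ k, 0 ≤ (Δd₁ k - Δd₂ k) * (τ * δ₁ k - (2 * α k * Δd₁ k + β k)) := fun k =>
    user_foc (α k) (β k) (ζ k) τ (d k) (cvec I J w Δw k) (Dlo k) (Dhi k)
      (q₁ k) (qc₁ k) (δ₁ k) (Δd₁ k) (Δd₂ k) (hδ1 k) (hu1 k).1.1
      (hu1 k).1.2.1 (hu1 k).1.2.2 (hu2 k).1.2.1 (hu2 k).1.2.2 (hu1 k).2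
  have foc2 : ∀ k, 0 ≤ (Δd₂ k - Δd₁ k) * (τ * δ₂ k - (2 * α k * Δd₂ k + β k)) := fun k =>
    user_foc (α k) (β k) (ζ k) τ (d k) (cvec I J w Δw k) (Dlo k) (Dhi k)
      (q₂ k) (qc₂ k) (δ₂ k) (Δd₂ k) (Δd₁ k) (hδ2 k) (hu2 k).1.1
      (hu2 k).1.2.1 (hu2 k).1.2.2 (hu1 k).1.2.1 (hu1 k).1.2.2 (hu2 k).2
  have op1 : 0 ≤ ∑ k, δ₁ k * (qc₂ k - qc₁ k) := op_foc q₁ qc₁ qc₂ δ₁ π F hδ1 hQ1 hQ2 hop1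
  have op2 : 0 ≤ ∑ k, δ₂ k * (qc₁ k - qc₂ k) := op_foc q₂ qc₂ qc₁ δ₂ π F hδ2 hQ2 hQ1 hop2
  have hkey : ∀ k, 2 * α k * (Δd₁ k - Δd₂ k) ^ 2 ≤
      τ * ((δ₁ k - δ₂ k) * (Δd₁ k - Δd₂ k)) := fun k => by
    nlinarith [foc1 k, foc2 k]
  have hsum1 : ∑ k, 2 * α k * (Δd₁ k - Δd₂ k) ^ 2 ≤
      ∑ k, τ * ((δ₁ k - δ₂ k) * (Δd₁ k - Δd₂ k)) :=
    Finset.sum_le_sum fun k _ => hkey k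
  have hzero : ∑ k, (τ * ((δ₁ k - δ₂ k) * (Δd₁ k - Δd₂ k))
      + τ * (δ₁ k * (qc₂ k - qc₁ k)) + τ * (δ₂ k * (qc₁ k - qc₂ k))) = 0 :=
    Finset.sum_eq_zero fun k _ => by rw [hqcv1 k, hqcv2 k]; ring
  rw [Finset.sum_add_distrib, Finset.sum_add_distrib] at hzero
  have hτ1 : 0 ≤ ∑ k, τ * (δ₁ k * (qc₂ k - qc₁ k)) := by
    rw [← Finset.mul_sum]; exact mul_nonneg hτ.le op1
  have hτ2 : 0 ≤ ∑ k, τ * (δ₂ k * (qc₁ k - qc₂ k)) := by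
    rw [← Finset.mul_sum]; exact mul_nonneg hτ.le op2
  have htot : ∑ k, 2 * α k * (Δd₁ k - Δd₂ k) ^ 2 ≤ 0 := by linarith
  have hnn : ∀ k ∈ Finset.univ, (0:ℝ) ≤ 2 * α k * (Δd₁ k - Δd₂ k) ^ 2 := fun k _ => by
    have := (hα k).le; positivity
  have heq0 : ∀ k ∈ Finset.univ, 2 * α k * (Δd₁ k - Δd₂ k) ^ 2 = 0 :=
    (Finset.sum_eq_zero_iff_of_nonneg hnn).mp
      (le_antisymm htot (Finset.sum_nonneg hnn))
  have heq : ∀ k, Δd₁ k = Δd₂ k := fun k => by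
    have h0 := heq0 k (Finset.mem_univ k)
    have hsq : (Δd₁ k - Δd₂ k) ^ 2 ≤ 0 := by nlinarith [hα k]
    have hsq' : (Δd₁ k - Δd₂ k) ^ 2 = 0 := le_antisymm hsq (sq_nonneg _)
    have := pow_eq_zero_iff (two_ne_zero) |>.mp hsq'
    linarith [sub_eq_zero.mp this]
  refine ⟨funext heq, funext fun k => ?_⟩
  rw [hqcv1 k, hqcv2 k, heq k]
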